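/- Let n ≥ 2 and let L be a real symmetric positive semidefinite n×n matrix with L·𝟙 = 0 whose kernel is exactly the span of 𝟙 (i.e., L·x = 0 implies x is a scalar multiple of 𝟙). Let L⁺ be an n×n real matrix satisfying L·L⁺·L = L, L⁺·L·L⁺ = L⁺, (L·L⁺)ᵀ = L·L⁺, (L⁺·L)ᵀ = L⁺·L. Let i ≠ j be two indices and set E = e_i − e_j (a single port). Then for every real γ > 0, the matrix γ·L − E·Eᵀ is positive semidefinite if and only if γ ≥ R_ij, where R_ij = (e_i − e_j)ᵀ·L⁺·(e_i − e_j) is the effective resistance between nodes i and j. In particular, the smallest γ > 0 for which the LMI γ·L − E·Eᵀ ⪰ 0 holds (which is the induced L₂-gain / H∞-norm of the single-port network ẋ = −L x + E d, y = Eᵀ x) equals the effective resistance R_ij. -/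

import Mathlib

/-!
Since `L` is symmetric, `L * Lp` is the orthogonal projection onto the range of `L`, which is the
orthogonal complement of `ker L = span 𝟙`. The port vector `e = e_i - e_j` is orthogonal to `𝟙`,
so `u = Lp e` solves `L u = e`, and the effective resistance is `R = eᵀ u = uᵀ L u > 0`.
Cauchy–Schwarz for the semi-inner product `xᵀ L y` gives `(eᵀ x)² = (uᵀ L x)² ≤ R · xᵀ L x`, so
`γ L - e eᵀ ⪰ 0` once `γ ≥ R`; conversely, testing the LMI on `u` gives `γ R - R² ≥ 0`.
-/

open Matrix

namespace Matrix

variable {ι : Type*} [Fintype ι]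

theorem PosSemidef.dotProduct_mulVec_sq_le {M : Matrix ι ι ℝ} (hM : M.PosSemidef) (x y : ι → ℝ) :
    (x ⬝ᵥ M *ᵥ y) ^ 2 ≤ (x ⬝ᵥ M *ᵥ x) * (y ⬝ᵥ M *ᵥ y) := by
  let := M.toSeminormedAddCommGroup hM
  let := M.toInnerProductSpace hM
  have h : (M *ᵥ y ⬝ᵥ x) * (M *ᵥ y ⬝ᵥ x) ≤ (M *ᵥ x ⬝ᵥ x) * (M *ᵥ y ⬝ᵥ y) :=
    real_inner_mul_inner_self_le x y
  simpa only [dotProduct_comm _ x, dotProduct_comm _ y, sq] using h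

theorem PosSemidef.dotProduct_pos_of_mulVec_eq {L : Matrix ι ι ℝ} (hL : L.PosSemidef)
    {u e : ι → ℝ} (hu : L *ᵥ u = e) (he : e ≠ 0) : 0 < e ⬝ᵥ u := by
  have hR : e ⬝ᵥ u = u ⬝ᵥ L *ᵥ u := by rw [hu, dotProduct_comm]
  have hne : u ⬝ᵥ L *ᵥ u ≠ 0 := fun h => he (hu ▸ (hL.dotProduct_mulVec_zero_iff u).mp h)
  rw [hR]
  exact (hL.dotProduct_mulVec_nonneg u).lt_of_ne' hne

theorem dotProduct_smul_sub_vecMulVec_mulVec (γ : ℝ) (L : Matrix ι ι ℝ) (e x : ι → ℝ) :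
    x ⬝ᵥ (γ • L - vecMulVec e e) *ᵥ x = γ * (x ⬝ᵥ L *ᵥ x) - (e ⬝ᵥ x) ^ 2 := by
  rw [sub_mulVec, dotProduct_sub, vecMulVec_mulVec, smul_mulVec, dotProduct_smul]
  simp only [op_smul_eq_smul, dotProduct_smul, smul_eq_mul, dotProduct_comm x e, sq]

theorem PosSemidef.smul_sub_vecMulVec_posSemidef_iff {L : Matrix ι ι ℝ} (hL : L.PosSemidef)
    {u e : ι → ℝ} (hu : L *ᵥ u = e) (he : e ≠ 0) (γ : ℝ) :
    (γ • L - vecMulVec e e).PosSemidef ↔ e ⬝ᵥ u ≤ γ := by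
  have hLs : L.IsSymm := isHermitian_iff_isSymm.mp hL.1
  have hR : u ⬝ᵥ L *ᵥ u = e ⬝ᵥ u := by rw [hu, dotProduct_comm]
  have hRpos := hL.dotProduct_pos_of_mulVec_eq hu he
  constructor
  · intro h
    have hu' := h.dotProduct_mulVec_nonneg u
    rw [star_trivial, dotProduct_smul_sub_vecMulVec_mulVec, hR] at hu'
    nlinarith
  · intro hγ
    have hsymm : (γ • L - vecMulVec e e).IsHermitian := by
      rw [isHermitian_iff_isSymm]
      exact (hLs.smul γ).sub (transpose_vecMulVec e e)
    refine .of_dotProduct_mulVec_nonneg hsymm fun x => ?_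
    have hex : e ⬝ᵥ x = u ⬝ᵥ L *ᵥ x := by
      rw [← hu, dotProduct_mulVec, ← mulVec_transpose, hLs.eq, dotProduct_comm]
    have hcs := hL.dotProduct_mulVec_sq_le u x
    have hx := hL.dotProduct_mulVec_nonneg x
    rw [star_trivial] at hx ⊢
    rw [dotProduct_smul_sub_vecMulVec_mulVec, hex]
    rw [hR] at hcs
    nlinarith

variable {R : Type*} [CommRing R] [LinearOrder R] [IsStrictOrderedRing R]

theorem IsSymm.mulVec_mulVec_eq_self_of_orthogonal_ker {L Lp : Matrix ι ι R} (hL : L.IsSymm)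
    (hpinv : L * Lp * L = L) (hproj : (L * Lp)ᵀ = L * Lp) {v : ι → R}
    (hv : ∀ z, L *ᵥ z = 0 → z ⬝ᵥ v = 0) : L *ᵥ (Lp *ᵥ v) = v := by
  have hLLLp : L * (L * Lp) = L :=
    calc L * (L * Lp) = (L * Lp * L)ᵀ := by rw [transpose_mul, hproj, hL.eq]
      _ = L := by rw [hpinv, hL.eq]
  set w := v - L *ᵥ (Lp *ᵥ v)
  have hw : L *ᵥ w = 0 := by
    rw [mulVec_sub, mulVec_mulVec, mulVec_mulVec, mul_assoc, hLLLp, sub_self]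
  have hww : w ⬝ᵥ w = 0 := by
    rw [dotProduct_sub w, hv w hw, dotProduct_mulVec, ← mulVec_transpose, hL.eq, hw,
      zero_dotProduct, sub_zero]
  exact (sub_eq_zero.mp (dotProduct_self_eq_zero.mp hww)).symm

end Matrix

theorem hinf_norm_eq_effective_resistance_general {n : ℕ}
    (L : Matrix (Fin n) (Fin n) ℝ) (hL : L.PosSemidef)
    (hker : ∀ x : Fin n → ℝ, L *ᵥ x = 0 → ∃ c : ℝ, x = c • (fun _ => (1 : ℝ)))
    (Lp : Matrix (Fin n) (Fin n) ℝ)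
    (h1 : L * Lp * L = L)
    (h3 : (L * Lp)ᵀ = L * Lp)
    (i j : Fin n) (hij : i ≠ j) :
    (∀ γ : ℝ, 0 < γ →
      ((γ • L - vecMulVec (Pi.single i 1 - Pi.single j 1)
          (Pi.single i 1 - Pi.single j 1)).PosSemidef ↔
        γ ≥ (Pi.single i 1 - Pi.single j 1) ⬝ᵥ (Lp *ᵥ (Pi.single i 1 - Pi.single j 1)))) ∧
    IsLeast {γ : ℝ | 0 < γ ∧
        (γ • L - vecMulVec (Pi.single i 1 - Pi.single j 1)
          (Pi.single i 1 - Pi.single j 1)).PosSemidef}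
      ((Pi.single i 1 - Pi.single j 1) ⬝ᵥ (Lp *ᵥ (Pi.single i 1 - Pi.single j 1))) := by
  set e : Fin n → ℝ := Pi.single i 1 - Pi.single j 1
  have he : e ≠ 0 := fun h => by simpa [e, hij] using congrFun h i
  have hLu : L *ᵥ (Lp *ᵥ e) = e :=
    (isHermitian_iff_isSymm.mp hL.1).mulVec_mulVec_eq_self_of_orthogonal_ker h1 h3 fun z hz => by
      obtain ⟨c, rfl⟩ := hker z hz
      simp [e, dotProduct_sub]
  have hiff := hL.smul_sub_vecMulVec_posSemidef_iff hLu he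
  exact ⟨fun γ _ => hiff γ, ⟨hL.dotProduct_pos_of_mulVec_eq hLu he, (hiff _).mpr le_rfl⟩,
    fun γ hγ => (hiff γ).mp hγ.2⟩

/-- Theorem 3 of the paper: for a connected-graph Laplacian `L` (symmetric PSD,
`L·𝟙 = 0`, kernel exactly `span{𝟙}`) with Moore–Penrose pseudoinverse `Lp`, a single port
`E = e_i − e_j` (`i ≠ j`), and the effective resistance `R_ij = (e_i−e_j)ᵀ·Lp·(e_i−e_j)`:
for every `γ > 0`, `γ·L − E·Eᵀ ⪰ 0` iff `γ ≥ R_ij`; in particular the smallest `γ > 0`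
for which the LMI holds (the H∞-norm of the single-port network) equals `R_ij`. -/
theorem hinf_norm_eq_effective_resistance {n : ℕ} (hn : 2 ≤ n)
    (L : Matrix (Fin n) (Fin n) ℝ) (hL : L.PosSemidef)
    (hL1 : L *ᵥ (fun _ => (1 : ℝ)) = 0)
    (hker : ∀ x : Fin n → ℝ, L *ᵥ x = 0 → ∃ c : ℝ, x = c • (fun _ => (1 : ℝ)))
    (Lp : Matrix (Fin n) (Fin n) ℝ)
    (h1 : L * Lp * L = L) (h2 : Lp * L * Lp = Lp)
    (h3 : (L * Lp)ᵀ = L * Lp) (h4 : (Lp * L)ᵀ = Lp * L)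
    (i j : Fin n) (hij : i ≠ j) :
    (∀ γ : ℝ, 0 < γ →
      ((γ • L - vecMulVec (Pi.single i 1 - Pi.single j 1)
          (Pi.single i 1 - Pi.single j 1)).PosSemidef ↔
        γ ≥ (Pi.single i 1 - Pi.single j 1) ⬝ᵥ (Lp *ᵥ (Pi.single i 1 - Pi.single j 1)))) ∧
    IsLeast {γ : ℝ | 0 < γ ∧
        (γ • L - vecMulVec (Pi.single i 1 - Pi.single j 1)
          (Pi.single i 1 - Pi.single j 1)).PosSemidef}
      ((Pi.single i 1 - Pi.single j 1) ⬝ᵥ (Lp *ᵥ (Pi.single i 1 - Pi.single j 1))) :=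
  hinf_norm_eq_effective_resistance_general L hL hker Lp h1 h3 i j hij
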